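/- Let P, Q be probability measures on (Ω, M) with Q ≪ P, let ν > 0, and define φ_ν := (dQ/dP)^ν. For ρ : Ω → [0,∞] measurable and β ≠ 0, let T^+_β(ρ) := { τ : Ω → [0,∞] measurable : E_P[τ^β] ≤ E_P[ρ^β] }. Then sup_{τ ∈ T^+_{1+ν⁻¹}(φ_ν)} log ∫ τ dQ = log ∫ φ_ν dQ = inf_{c>1} { c⁻¹ log ∫ φ_ν^c dP + (c−1)⁻¹ R_{c/(c−1)}(Q‖P) }, with the infimum achieved at c = 1 + ν⁻¹, and moreover log ∫ φ_ν dQ = ν(1+ν) R_{1+ν}(Q‖P). -/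

import Mathlib

open MeasureTheory Real Set Filter
open scoped ENNReal Classical

variable {Ω : Type*} [MeasurableSpace Ω]

/-- Auxiliary Rényi divergence for `α ∈ (0,1) ∪ (1,∞)`:
`R_α(Q‖P) = (α(α-1))⁻¹ log ∫_{p>0} q^α p^{1-α} dν` with `ν = P + Q`,
and `+∞` if `α > 1` and `Q` is not absolutely continuous w.r.t. `P`. -/
noncomputable def renyiDivAux (α : ℝ) (Q P : Measure Ω) : EReal :=
  if 1 < α ∧ ¬ Q ≪ P then (⊤ : EReal)
  else ((α * (α - 1))⁻¹ : ℝ) *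
    ENNReal.log (∫⁻ x in {x | 0 < P.rnDeriv (P + Q) x},
      (Q.rnDeriv (P + Q) x) ^ α * (P.rnDeriv (P + Q) x) ^ (1 - α) ∂(P + Q))

/-- Rényi divergence of order `α ∈ ℝ \ {0,1}`, extended to negative orders by
`R_α(Q‖P) = R_{1-α}(P‖Q)`. -/
noncomputable def renyiDiv (α : ℝ) (Q P : Measure Ω) : EReal :=
  if α < 0 then renyiDivAux (1 - α) P Q else renyiDivAux α Q P

/-- Relative entropy (KL divergence): `R(Q‖P) = ∫ log(dQ/dP) dQ` if `Q ≪ P`, else `+∞`. -/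
noncomputable def relEnt (Q P : Measure Ω) : EReal :=
  if Q ≪ P then ((∫ x, Real.log (Q.rnDeriv P x).toReal ∂Q : ℝ) : EReal) else ⊤

/-- Cumulant generating function of `log (dQ/dP)` under `Q`:
`Λ_Q^{log dQ/dP}(λ) = log E_Q[(dQ/dP)^λ]`. -/
noncomputable def cgfLLR (Q P : Measure Ω) (l : ℝ) : EReal :=
  ENNReal.log (∫⁻ x, (Q.rnDeriv P x) ^ l ∂Q)

/-- Rényi-divergence ambiguity set `U^Λ(P)`. -/
def ambiguitySet (L : ℝ → EReal) (P : Measure Ω) : Set (Measure Ω) :=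
  {Q | IsProbabilityMeasure Q ∧ Q ≪ P ∧ ∀ l > 0, cgfLLR Q P l ≤ L l}

/-- Addition on `EReal` with the convention `-∞ + ∞ = ∞`. -/
noncomputable def EReal.addTop (x y : EReal) : EReal := if x = ⊤ ∨ y = ⊤ then ⊤ else x + y

/-- `G(r) = P(dQ/dP ≥ r)`. -/
noncomputable def tailG (Q P : Measure Ω) (r : ℝ) : ℝ≥0∞ :=
  P {x | ENNReal.ofReal r ≤ Q.rnDeriv P x}

/-- The distribution of `dQ/dP` under `P` (as a measure on `ℝ`). -/
noncomputable def likDist (Q P : Measure Ω) : Measure ℝ :=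
  P.map (fun x => (Q.rnDeriv P x).toReal)

/-- `G_μ(r) = μ([r,∞))`. -/
noncomputable def Gmu (μ : Measure ℝ) (r : ℝ) : ℝ≥0∞ := μ (Set.Ici r)

/-- `Λ_μ(λ) = log((λ+1) ∫₀^∞ G_μ(z) z^λ dz)`. -/
noncomputable def Lmu (μ : Measure ℝ) (l : ℝ) : EReal :=
  ENNReal.log (ENNReal.ofReal (l + 1) *
    ∫⁻ z in Set.Ioi (0 : ℝ), Gmu μ z * ENNReal.ofReal (z ^ l))

/-- The ambiguity set `U^μ(P) = U^{Λ_μ}(P)`. -/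
def Umu (μ : Measure ℝ) (P : Measure Ω) : Set (Measure Ω) := ambiguitySet (Lmu μ) P



section Helpers

variable {Ω : Type*} [MeasurableSpace Ω]

lemma EReal.coe_mul_coe_mul' (a b : ℝ) (x : EReal) :
    (a : EReal) * ((b : EReal) * x) = ((a * b : ℝ) : EReal) * x := by
  rw [EReal.coe_mul, mul_assoc]

lemma EReal.convex_coe_mul {r t : ℝ} (hr : 0 < r) (ht : 0 < t) (hrt : r + t = 1) (x : EReal) :
    (r : EReal) * x + (t : EReal) * x = x := by
  induction x with
  | bot =>
      rw [EReal.coe_mul_bot_of_pos hr, EReal.coe_mul_bot_of_pos ht]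
      rfl
  | coe x =>
      rw [← EReal.coe_mul, ← EReal.coe_mul, ← EReal.coe_add, ← add_mul, hrt, one_mul]
  | top =>
      rw [EReal.coe_mul_top_of_pos hr, EReal.coe_mul_top_of_pos ht]
      rfl

lemma renyi_integral_eq (P Q : Measure Ω) [IsProbabilityMeasure P] [IsProbabilityMeasure Q]
    (hQP : Q ≪ P) {a : ℝ} (ha : 0 < a) :
    (∫⁻ x in {x | 0 < P.rnDeriv (P + Q) x},
        (Q.rnDeriv (P + Q) x) ^ a * (P.rnDeriv (P + Q) x) ^ (1 - a) ∂(P + Q)) =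
      ∫⁻ x, Q.rnDeriv P x ^ a ∂P := by
  have hP : P ≪ P + Q := Measure.absolutelyContinuous_of_le (Measure.le_add_right le_rfl)
  have hpm : Measurable (P.rnDeriv (P + Q)) := Measure.measurable_rnDeriv _ _
  have hS : MeasurableSet {x | 0 < P.rnDeriv (P + Q) x} := measurableSet_lt measurable_const hpm
  have hfm : Measurable fun x => Q.rnDeriv P x ^ a := (Measure.measurable_rnDeriv Q P).pow_const a
  have h1 : ∫⁻ x in {x | 0 < P.rnDeriv (P + Q) x},
        (Q.rnDeriv (P + Q) x) ^ a * (P.rnDeriv (P + Q) x) ^ (1 - a) ∂(P + Q)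
      = ∫⁻ x in {x | 0 < P.rnDeriv (P + Q) x},
        P.rnDeriv (P + Q) x * (Q.rnDeriv P x ^ a) ∂(P + Q) := by
    refine lintegral_congr_ae ?_
    filter_upwards [ae_restrict_of_ae (Measure.rnDeriv_mul_rnDeriv hQP (κ := P + Q)),
      ae_restrict_of_ae (Measure.rnDeriv_ne_top P (P + Q)),
      ae_restrict_mem hS] with x h1 h2 h3
    have h3' : (0:ℝ≥0∞) < P.rnDeriv (P + Q) x := h3
    have hx0 : P.rnDeriv (P + Q) x ≠ 0 := h3'.ne'
    have h1' : Q.rnDeriv P x * P.rnDeriv (P + Q) x = Q.rnDeriv (P + Q) x := h1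
    calc (Q.rnDeriv (P + Q) x) ^ a * (P.rnDeriv (P + Q) x) ^ (1 - a)
        = (Q.rnDeriv P x * P.rnDeriv (P + Q) x) ^ a * (P.rnDeriv (P + Q) x) ^ (1 - a) := by
          rw [h1']
      _ = Q.rnDeriv P x ^ a * ((P.rnDeriv (P + Q) x) ^ a * (P.rnDeriv (P + Q) x) ^ (1 - a)) := by
          rw [ENNReal.mul_rpow_of_nonneg _ _ ha.le, mul_assoc]
      _ = Q.rnDeriv P x ^ a * P.rnDeriv (P + Q) x := by
          rw [← ENNReal.rpow_add a (1 - a) hx0 h2]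
          norm_num
      _ = P.rnDeriv (P + Q) x * (Q.rnDeriv P x ^ a) := mul_comm _ _
  have h2 : ∫⁻ x in {x | 0 < P.rnDeriv (P + Q) x},
        P.rnDeriv (P + Q) x * (Q.rnDeriv P x ^ a) ∂(P + Q)
      = ∫⁻ x in {x | 0 < P.rnDeriv (P + Q) x}, Q.rnDeriv P x ^ a ∂P :=
    setLIntegral_rnDeriv_mul hP hfm.aemeasurable hS
  have h3 : P {x | 0 < P.rnDeriv (P + Q) x}ᶜ = 0 := by
    rw [← Measure.setLIntegral_rnDeriv' hP hS.compl]
    rw [setLIntegral_congr_fun hS.compl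
      (fun x hx => by
        simpa using (nonpos_iff_eq_zero.mp (not_lt.mp hx) : P.rnDeriv (P + Q) x = 0))]
    simp
  rw [h1, h2, ← lintegral_add_compl (fun x => Q.rnDeriv P x ^ a) hS (μ := P),
    setLIntegral_measure_zero _ _ h3, add_zero]

lemma renyiDiv_eq (P Q : Measure Ω) [IsProbabilityMeasure P] [IsProbabilityMeasure Q]
    (hQP : Q ≪ P) {a : ℝ} (ha : 1 < a) :
    renyiDiv a Q P =
      (((a * (a - 1))⁻¹ : ℝ) : EReal) * ENNReal.log (∫⁻ x, Q.rnDeriv P x ^ a ∂P) := by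
  rw [renyiDiv, if_neg (by linarith), renyiDivAux, if_neg (fun h => h.2 hQP),
    renyi_integral_eq P Q hQP (by linarith)]

lemma lintegral_rpow_rnDeriv_q (P Q : Measure Ω) [IsProbabilityMeasure P]
    [IsProbabilityMeasure Q] (hQP : Q ≪ P) {s : ℝ} (hs : 0 ≤ s) :
    ∫⁻ x, Q.rnDeriv P x ^ s ∂Q = ∫⁻ x, Q.rnDeriv P x ^ (s + 1) ∂P := by
  rw [← lintegral_rnDeriv_mul hQP
    (((Measure.measurable_rnDeriv Q P).pow_const s).aemeasurable)]
  refine lintegral_congr fun x => ?_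
  rw [ENNReal.rpow_add_of_nonneg s 1 hs zero_le_one, ENNReal.rpow_one, mul_comm]

end Helpers

/-- **Tightness over QoIs (Theorem 7.4(1)).** Let `Q ≪ P`, `ν > 0` and
`φ_ν = (dQ/dP)^ν`. Over the class
`T^+_{1+ν⁻¹}(φ_ν) = {τ ≥ 0 measurable : E_P[τ^{1+ν⁻¹}] ≤ E_P[φ_ν^{1+ν⁻¹}]}`,
`sup_τ log ∫ τ dQ = log ∫ φ_ν dQ
 = inf_{c>1} { c⁻¹ log ∫ φ_ν^c dP + (c-1)⁻¹ R_{c/(c-1)}(Q‖P) }`,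
with the infimum achieved at `c = 1 + ν⁻¹`, and moreover
`log ∫ φ_ν dQ = ν(1+ν) R_{1+ν}(Q‖P)`. -/
theorem tightness_over_qois (P Q : Measure Ω)
    [IsProbabilityMeasure P] [IsProbabilityMeasure Q] (hQP : Q ≪ P)
    (ν : ℝ) (hν : 0 < ν) :
    (⨆ τ ∈ {τ : Ω → ℝ≥0∞ | Measurable τ ∧
        (∫⁻ x, τ x ^ (1 + ν⁻¹) ∂P) ≤
          ∫⁻ x, (Q.rnDeriv P x ^ ν) ^ (1 + ν⁻¹) ∂P},
        ENNReal.log (∫⁻ x, τ x ∂Q)) =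
      ENNReal.log (∫⁻ x, Q.rnDeriv P x ^ ν ∂Q) ∧
    ENNReal.log (∫⁻ x, Q.rnDeriv P x ^ ν ∂Q) =
      (⨅ c ∈ Set.Ioi (1 : ℝ),
        ((c⁻¹ : ℝ) : EReal) * ENNReal.log (∫⁻ x, (Q.rnDeriv P x ^ ν) ^ c ∂P)
          + (((c - 1)⁻¹ : ℝ) : EReal) * renyiDiv (c / (c - 1)) Q P) ∧
    (⨅ c ∈ Set.Ioi (1 : ℝ),
        ((c⁻¹ : ℝ) : EReal) * ENNReal.log (∫⁻ x, (Q.rnDeriv P x ^ ν) ^ c ∂P)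
          + (((c - 1)⁻¹ : ℝ) : EReal) * renyiDiv (c / (c - 1)) Q P) =
      (((1 + ν⁻¹)⁻¹ : ℝ) : EReal) *
          ENNReal.log (∫⁻ x, (Q.rnDeriv P x ^ ν) ^ (1 + ν⁻¹) ∂P)
        + ((((1 + ν⁻¹) - 1)⁻¹ : ℝ) : EReal) *
            renyiDiv ((1 + ν⁻¹) / ((1 + ν⁻¹) - 1)) Q P ∧
    ENNReal.log (∫⁻ x, Q.rnDeriv P x ^ ν ∂Q) =
      ((ν * (1 + ν) : ℝ) : EReal) * renyiDiv (1 + ν) Q P := by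
  classical
  have hfm : Measurable (Q.rnDeriv P) := Measure.measurable_rnDeriv Q P
  have hνinv : (0:ℝ) < ν⁻¹ := inv_pos.mpr hν
  have hc0 : (1:ℝ) < 1 + ν⁻¹ := by linarith
  have hc0mem : (1 + ν⁻¹) ∈ Set.Ioi (1:ℝ) := hc0
  have hLQ : ∫⁻ x, Q.rnDeriv P x ^ ν ∂Q = ∫⁻ x, Q.rnDeriv P x ^ (ν + 1) ∂P :=
    lintegral_rpow_rnDeriv_q P Q hQP hν.le
  have hAc0 : ν * (1 + ν⁻¹) = ν + 1 := by field_simp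
  have hBc0 : (1 + ν⁻¹) / (1 + ν⁻¹ - 1) = ν + 1 := by
    rw [add_sub_cancel_left]
    field_simp
  have hphi : ∫⁻ x, (Q.rnDeriv P x ^ ν) ^ (1 + ν⁻¹) ∂P
      = ∫⁻ x, Q.rnDeriv P x ^ (ν + 1) ∂P := by
    refine lintegral_congr fun x => ?_
    rw [← ENNReal.rpow_mul, hAc0]
  -- simplification of the generic expression in the infimum
  have hexpr : ∀ c : ℝ, 1 < c →
      ((c⁻¹ : ℝ) : EReal) * ENNReal.log (∫⁻ x, (Q.rnDeriv P x ^ ν) ^ c ∂P)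
        + (((c - 1)⁻¹ : ℝ) : EReal) * renyiDiv (c / (c - 1)) Q P
      = ((c⁻¹ : ℝ) : EReal) * ENNReal.log (∫⁻ x, (Q.rnDeriv P x ^ ν) ^ c ∂P)
        + ((((c - 1) / c) : ℝ) : EReal) *
            ENNReal.log (∫⁻ x, Q.rnDeriv P x ^ (c / (c - 1)) ∂P) := by
    intro c hc
    have hc1 : c - 1 ≠ 0 := (by linarith : (0:ℝ) < c - 1).ne'
    have hcne : c ≠ 0 := (by linarith : (0:ℝ) < c).ne'
    have hβ : 1 < c / (c - 1) := (one_lt_div (by linarith)).mpr (by linarith)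
    rw [renyiDiv_eq P Q hQP hβ, EReal.coe_mul_coe_mul']
    congr 2
    field_simp
    rw [sub_sub_cancel, mul_one]
  -- Hölder lower bound
  have hhold : ∀ c : ℝ, 1 < c →
      ENNReal.log (∫⁻ x, Q.rnDeriv P x ^ (ν + 1) ∂P) ≤
        ((c⁻¹ : ℝ) : EReal) * ENNReal.log (∫⁻ x, (Q.rnDeriv P x ^ ν) ^ c ∂P)
          + ((((c - 1) / c) : ℝ) : EReal) *
              ENNReal.log (∫⁻ x, Q.rnDeriv P x ^ (c / (c - 1)) ∂P) := by
    intro c hc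
    have hc1 : c - 1 ≠ 0 := (by linarith : (0:ℝ) < c - 1).ne'
    have hcne : c ≠ 0 := (by linarith : (0:ℝ) < c).ne'
    have hconj : Real.HolderConjugate c (c / (c - 1)) :=
      (Real.holderConjugate_iff_eq_conjExponent hc).mpr rfl
    have h := ENNReal.lintegral_mul_le_Lp_mul_Lq P hconj
      ((hfm.pow_const ν).aemeasurable) hfm.aemeasurable
    have hL : ∫⁻ (x : Ω), ((fun x => Q.rnDeriv P x ^ ν) * Q.rnDeriv P) x ∂P
        = ∫⁻ x, Q.rnDeriv P x ^ (ν + 1) ∂P := by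
      refine lintegral_congr fun x => ?_
      simp only [Pi.mul_apply]
      rw [ENNReal.rpow_add_of_nonneg ν 1 hν.le zero_le_one, ENNReal.rpow_one]
    rw [hL] at h
    calc ENNReal.log (∫⁻ x, Q.rnDeriv P x ^ (ν + 1) ∂P)
        ≤ ENNReal.log ((∫⁻ x, (Q.rnDeriv P x ^ ν) ^ c ∂P) ^ (1 / c) *
            (∫⁻ x, Q.rnDeriv P x ^ (c / (c - 1)) ∂P) ^ (1 / (c / (c - 1)))) :=
          ENNReal.log_le_log_iff.mpr h
      _ = _ := by
          rw [ENNReal.log_mul_add, ENNReal.log_rpow, ENNReal.log_rpow, one_div, one_div,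
            inv_div]
  -- value at c₀ = 1 + ν⁻¹
  have hval : (((1 + ν⁻¹)⁻¹ : ℝ) : EReal) *
          ENNReal.log (∫⁻ x, (Q.rnDeriv P x ^ ν) ^ (1 + ν⁻¹) ∂P)
        + ((((1 + ν⁻¹) - 1)⁻¹ : ℝ) : EReal) *
            renyiDiv ((1 + ν⁻¹) / ((1 + ν⁻¹) - 1)) Q P
      = ENNReal.log (∫⁻ x, Q.rnDeriv P x ^ (ν + 1) ∂P) := by
    rw [hexpr _ hc0, hphi, hBc0]
    refine EReal.convex_coe_mul (inv_pos.mpr (by linarith)) (div_pos (by linarith) (by linarith))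
      ?_ _
    field_simp
    ring
  have hlow : ∀ c ∈ Set.Ioi (1:ℝ),
      ENNReal.log (∫⁻ x, Q.rnDeriv P x ^ (ν + 1) ∂P) ≤
        ((c⁻¹ : ℝ) : EReal) * ENNReal.log (∫⁻ x, (Q.rnDeriv P x ^ ν) ^ c ∂P)
          + (((c - 1)⁻¹ : ℝ) : EReal) * renyiDiv (c / (c - 1)) Q P := by
    intro c hc
    rw [hexpr c hc]
    exact hhold c hc
  refine ⟨?_, ?_, ?_, ?_⟩
  · -- part 1 : supremum over QoIs
    refine le_antisymm ?_ ?_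
    · refine iSup₂_le fun τ hτ => ?_
      obtain ⟨hτm, hτint⟩ := hτ
      rw [hLQ]
      refine ENNReal.log_le_log_iff.mpr ?_
      have hconj : Real.HolderConjugate (1 + ν⁻¹) ((1 + ν⁻¹) / ((1 + ν⁻¹) - 1)) :=
        (Real.holderConjugate_iff_eq_conjExponent hc0).mpr rfl
      have hho := ENNReal.lintegral_mul_le_Lp_mul_Lq P hconj hτm.aemeasurable hfm.aemeasurable
      have hsum : 1 / (1 + ν⁻¹) + 1 / (ν + 1) = 1 := by
        field_simp
      calc ∫⁻ x, τ x ∂Q = ∫⁻ x, (τ * Q.rnDeriv P) x ∂P := by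
            rw [← lintegral_rnDeriv_mul hQP hτm.aemeasurable]
            exact lintegral_congr fun x => mul_comm _ _
        _ ≤ (∫⁻ x, τ x ^ (1 + ν⁻¹) ∂P) ^ (1 / (1 + ν⁻¹)) *
              (∫⁻ x, Q.rnDeriv P x ^ ((1 + ν⁻¹) / ((1 + ν⁻¹) - 1)) ∂P) ^
                (1 / ((1 + ν⁻¹) / ((1 + ν⁻¹) - 1))) := hho
        _ = (∫⁻ x, τ x ^ (1 + ν⁻¹) ∂P) ^ (1 / (1 + ν⁻¹)) *
              (∫⁻ x, Q.rnDeriv P x ^ (ν + 1) ∂P) ^ (1 / (ν + 1)) := by rw [hBc0]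
        _ ≤ (∫⁻ x, Q.rnDeriv P x ^ (ν + 1) ∂P) ^ (1 / (1 + ν⁻¹)) *
              (∫⁻ x, Q.rnDeriv P x ^ (ν + 1) ∂P) ^ (1 / (ν + 1)) := by
            refine mul_le_mul_left (ENNReal.rpow_le_rpow (hτint.trans_eq hphi) ?_) _
            positivity
        _ = ∫⁻ x, Q.rnDeriv P x ^ (ν + 1) ∂P := by
            rw [← ENNReal.rpow_add_of_nonneg _ _ (by positivity) (by positivity), hsum,
              ENNReal.rpow_one]
    · have hmem : (fun x => Q.rnDeriv P x ^ ν) ∈ {τ : Ω → ℝ≥0∞ | Measurable τ ∧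
          (∫⁻ x, τ x ^ (1 + ν⁻¹) ∂P) ≤
            ∫⁻ x, (Q.rnDeriv P x ^ ν) ^ (1 + ν⁻¹) ∂P} :=
        ⟨hfm.pow_const ν, le_rfl⟩
      exact le_iSup₂ (f := fun τ _ => ENNReal.log (∫⁻ x, τ x ∂Q)) _ hmem
  · -- part 2
    rw [hLQ]
    exact le_antisymm (le_iInf₂ hlow) ((iInf₂_le _ hc0mem).trans hval.le)
  · -- part 3
    exact le_antisymm (iInf₂_le _ hc0mem)
      (le_iInf₂ fun c hc => hval.trans_le (hlow c hc))
  · -- part 4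
    rw [hLQ, renyiDiv_eq P Q hQP (by linarith : (1:ℝ) < 1 + ν), EReal.coe_mul_coe_mul']
    have hco : ν * (1 + ν) * ((1 + ν) * (1 + ν - 1))⁻¹ = 1 := by
      field_simp
      ring_nf
      exact mul_inv_cancel₀ hν.ne'
    rw [hco, EReal.coe_one, one_mul, add_comm ν 1]
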